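/- arXiv:1807.08970 — 2 statements merged into one kernel-verified Lean document; each statement's English description precedes it below -/
import Mathlib

section
/- Let n, k be positive integers and let y_1 < y_2 < ... < y_k be integers with 0 < y_1 and y_k ≤ 2n. Setting d_1 = y_1 and d_i = y_i − y_{i−1} for 2 ≤ i ≤ k, the number of trits used by the difference encoding satisfies ⌈log₂ d_1⌉ + ⌈log₂ d_2⌉ + ... + ⌈log₂ d_k⌉ + 2k ≤ k·log₂(n/k) + 4k. -/
/-!
Bound each `⌈log₂ dᵢ⌉` by `log₂ dᵢ + 1`. By concavity of the logarithm (AM–GM),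
`∑ log₂ dᵢ ≤ k · log₂ ((∑ dᵢ) / k)`, and the differences telescope to `y_k ≤ 2n`, so
`∑ log₂ dᵢ ≤ k · (1 + log₂ (n / k))`.
-/

open Finset Real

theorem Fin.sum_sub_pred_eq_last {G : Type*} [AddCommGroup G] {k : ℕ} (hk : 0 < k)
    (y d : Fin k → G)
    (hd : ∀ i : Fin k, d i = if _h : i.val = 0 then y i
      else y i - y ⟨i.val - 1, lt_of_le_of_lt (Nat.sub_le _ _) i.isLt⟩) :
    ∑ i, d i = y ⟨k - 1, by omega⟩ := by
  let w : ℕ → G := fun m => if h : 0 < m ∧ m ≤ k then y ⟨m - 1, by omega⟩ else 0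
  have hdw : ∀ i : Fin k, d i = w (i + 1) - w i := by
    intro i
    rw [hd i]
    by_cases hi : i.val = 0
    · obtain rfl : i = ⟨0, hk⟩ := Fin.ext hi
      simp [w, Nat.one_le_iff_ne_zero.mpr hk.ne']
    · have hi' : 0 < i.val ∧ i.val ≤ k := ⟨Nat.pos_of_ne_zero hi, i.isLt.le⟩
      simp [w, hi, hi', i.isLt]
  calc ∑ i, d i = ∑ m ∈ range k, (w (m + 1) - w m) := by
        rw [← Fin.sum_univ_eq_sum_range (fun m => w (m + 1) - w m)]
        exact sum_congr rfl fun i _ => hdw i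
    _ = w k - w 0 := sum_range_sub w k
    _ = y ⟨k - 1, by omega⟩ := by simp [w, hk]

theorem Fin.sub_pred_pos_of_strictMono {G : Type*} [AddCommGroup G] [PartialOrder G]
    [IsOrderedAddMonoid G] {k : ℕ} (hk : 0 < k) (y d : Fin k → G) (hmono : StrictMono y)
    (hpos : 0 < y ⟨0, hk⟩)
    (hd : ∀ i : Fin k, d i = if _h : i.val = 0 then y i
      else y i - y ⟨i.val - 1, lt_of_le_of_lt (Nat.sub_le _ _) i.isLt⟩)
    (i : Fin k) : 0 < d i := by
  rw [hd i]
  split_ifs with hi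
  · rwa [show i = ⟨0, hk⟩ from Fin.ext hi]
  · exact sub_pos.mpr (hmono (Fin.mk_lt_mk.mpr (by omega)))

theorem Real.sum_log_le_card_mul_log_average {ι : Type*} (s : Finset ι) (x : ι → ℝ)
    (hx : ∀ i ∈ s, 0 < x i) :
    ∑ i ∈ s, log (x i) ≤ #s * log ((∑ i ∈ s, x i) / #s) := by
  rcases s.eq_empty_or_nonempty with rfl | hs
  · simp
  have hcard : (0 : ℝ) < #s := by exact_mod_cast hs.card_pos
  have jensen := strictConcaveOn_log_Ioi.concaveOn.le_map_sum (t := s)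
    (w := fun _ => (#s : ℝ)⁻¹) (p := x) (fun _ _ => by positivity)
    (by simp [hcard.ne']) hx
  simp only [smul_eq_mul, ← mul_sum] at jensen
  calc ∑ i ∈ s, log (x i) = #s * ((#s : ℝ)⁻¹ * ∑ i ∈ s, log (x i)) := by field_simp
    _ ≤ #s * log ((∑ i ∈ s, x i) / #s) := by
        rw [div_eq_inv_mul]; gcongr

theorem Real.sum_ceil_logb_le {ι : Type*} (s : Finset ι) (x : ι → ℝ) (hx : ∀ i ∈ s, 0 < x i)
    {b : ℝ} (hb : 1 < b) :
    ∑ i ∈ s, (⌈logb b (x i)⌉ : ℝ) ≤ #s * logb b ((∑ i ∈ s, x i) / #s) + #s := by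
  have hlogb : ∑ i ∈ s, logb b (x i) ≤ #s * logb b ((∑ i ∈ s, x i) / #s) := by
    simp only [logb, ← sum_div, ← mul_div_assoc]
    exact div_le_div_of_nonneg_right (sum_log_le_card_mul_log_average s x hx) (log_pos hb).le
  calc ∑ i ∈ s, (⌈logb b (x i)⌉ : ℝ) ≤ ∑ i ∈ s, (logb b (x i) + 1) :=
        sum_le_sum fun i _ => (Int.ceil_lt_add_one _).le
    _ ≤ #s * logb b ((∑ i ∈ s, x i) / #s) + #s := by
        rw [sum_add_distrib, sum_const, nsmul_one]
        linarith

theorem stmt_0_general (n k : ℕ) (hk : 0 < k) (y : Fin k → ℤ)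
    (hmono : StrictMono y)
    (hpos : 0 < y ⟨0, hk⟩)
    (hle : y ⟨k - 1, Nat.sub_lt hk one_pos⟩ ≤ 2 * n)
    (d : Fin k → ℤ)
    (hd : ∀ i : Fin k, d i = if h : i.val = 0 then y i
      else y i - y ⟨i.val - 1, lt_of_le_of_lt (Nat.sub_le _ _) i.isLt⟩) :
    (∑ i : Fin k, (⌈Real.logb 2 (d i)⌉ : ℝ)) + 2 * k
      ≤ k * Real.logb 2 ((n : ℝ) / k) + 4 * k := by
  have hd_pos : ∀ i, (0 : ℝ) < d i := fun i => by
    exact_mod_cast Fin.sub_pred_pos_of_strictMono hk y d hmono hpos hd i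
  have hk' : (0 : ℝ) < k := by exact_mod_cast hk
  have hS : ∑ i, (d i : ℝ) ≤ 2 * n := by
    exact_mod_cast (Fin.sum_sub_pred_eq_last hk y d hd).trans_le hle
  set S := ∑ i, (d i : ℝ)
  have hS_pos : 0 < S / k := div_pos (sum_pos (fun i _ => hd_pos i) ⟨⟨0, hk⟩, mem_univ _⟩) hk'
  have hS_le : S / k ≤ 2 * (n / k) := by
    rw [← mul_div_assoc]
    exact div_le_div_of_nonneg_right hS hk'.le
  have hmean : logb 2 (S / k) ≤ 1 + logb 2 ((n : ℝ) / k) := by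
    have hn : (0 : ℝ) < n / k := by linarith
    calc logb 2 (S / k) ≤ logb 2 (2 * (n / k)) := logb_le_logb_of_le one_lt_two hS_pos hS_le
      _ = 1 + logb 2 ((n : ℝ) / k) := by
          rw [logb_mul two_ne_zero hn.ne', logb_self_eq_one one_lt_two]
  have hceil := sum_ceil_logb_le univ (fun i => (d i : ℝ)) (fun i _ => hd_pos i) one_lt_two
  rw [card_univ, Fintype.card_fin] at hceil
  have := mul_le_mul_of_nonneg_left hmean hk'.le
  linarith

/-- The difference encoding of a set `{y 0 < y 1 < ⋯ < y (k-1)}` of integers in `(0, 2n]`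
uses at most `k·log₂(n/k) + 4k` trits:
`⌈log₂ d₁⌉ + ⋯ + ⌈log₂ d_k⌉ + 2k ≤ k·log₂(n/k) + 4k`, where `d` are successive differences. -/
theorem stmt_0 (n k : ℕ) (hn : 0 < n) (hk : 0 < k) (y : Fin k → ℤ)
    (hmono : StrictMono y)
    (hpos : 0 < y ⟨0, hk⟩)
    (hle : y ⟨k - 1, Nat.sub_lt hk one_pos⟩ ≤ 2 * n)
    (d : Fin k → ℤ)
    (hd : ∀ i : Fin k, d i = if h : i.val = 0 then y i
      else y i - y ⟨i.val - 1, lt_of_le_of_lt (Nat.sub_le _ _) i.isLt⟩) :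
    (∑ i : Fin k, (⌈Real.logb 2 (d i)⌉ : ℝ)) + 2 * k
      ≤ k * Real.logb 2 ((n : ℝ) / k) + 4 * k :=
  stmt_0_general n k hk y hmono hpos hle d hd
end

section
/- For all integers r, n with 1 ≤ r ≤ n, the sum over l from 0 to ⌈log₂ r⌉ of the quantity 2^l · log₂(n/2^l) + 2^{l+2} is at most 4r·log₂(n/r) + 20r. -/
open Finset Real

/- Write `L = ⌈log₂ r⌉` and `A = log₂(n/r) ≥ 0`. Since `r ≤ 2^L`, each logarithm splits as
`log₂(n/2^l) ≤ A + (L - l)`, and the resulting sums are geometric: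
`∑ 2^l = 2^(L+1) - 1` and `∑ 2^l (L - l) = 2^(L+1) - L - 2`. Everything is then controlled by
`2^(L+1) ≤ 4r`, which holds because `2^(L-1) < r` by minimality of `L`. -/

theorem Nat.pow_clog_le_mul {b r : ℕ} (hb : 1 < b) (hr : 1 ≤ r) : b ^ clog b r ≤ b * r := by
  rcases hr.eq_or_lt with rfl | hr
  · simpa using hb.le
  · calc b ^ clog b r = b ^ (clog b r - 1 + 1) := by rw [Nat.sub_add_cancel (clog_pos hb hr)]
      _ = b * b ^ (clog b r - 1) := by ring
      _ ≤ b * r := Nat.mul_le_mul_left b (pow_pred_clog_lt_self hb hr).le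

theorem sum_range_two_pow {R : Type*} [Ring R] (L : ℕ) :
    ∑ l ∈ range L, (2 : R) ^ l = 2 ^ L - 1 := by
  have h := geom_sum_mul (2 : R) L
  rwa [show (2 : R) - 1 = 1 by norm_num, mul_one] at h

theorem sum_range_two_pow_mul_sub {R : Type*} [CommRing R] (L : ℕ) :
    ∑ l ∈ range (L + 1), (2 : R) ^ l * ((L : R) - l) = 2 ^ (L + 1) - L - 2 := by
  induction L with
  | zero => simp
  | succ L ih =>
    have hshift : ∑ l ∈ range (L + 1), (2 : R) ^ l * ((↑(L + 1) : R) - l)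
        = ∑ l ∈ range (L + 1), (2 : R) ^ l * ((L : R) - l) + ∑ l ∈ range (L + 1), (2 : R) ^ l := by
      rw [← sum_add_distrib]
      refine sum_congr rfl fun l _ => ?_
      push_cast
      ring
    rw [sum_range_succ, hshift, ih, sum_range_two_pow]
    push_cast
    ring

theorem Real.logb_div_pow_le {b x y : ℝ} {L : ℕ} (hb : 1 < b) (hx : x ≠ 0) (hy : 0 < y)
    (hyL : y ≤ b ^ L) (l : ℕ) : logb b (x / b ^ l) ≤ logb b (x / y) + (L - l) := by
  have hlogb_pow (k : ℕ) : logb b (b ^ k) = k := by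
    rw [logb_pow, logb_self_eq_one hb, mul_one]
  have hy_le : logb b y ≤ L := hlogb_pow L ▸ logb_le_logb_of_le hb hy hyL
  rw [logb_div hx (pow_ne_zero l (by positivity)), logb_div hx hy.ne', hlogb_pow]
  linarith

/-- For integers `1 ≤ r ≤ n`,
`∑_{l=0}^{⌈log₂ r⌉} (2^l·log₂(n/2^l) + 2^{l+2}) ≤ 4r·log₂(n/r) + 20r`,
where `⌈log₂ r⌉ = Nat.clog 2 r` is the least `L` with `r ≤ 2^L`. -/
theorem stmt_3 (r n : ℕ) (hr : 1 ≤ r) (hrn : r ≤ n) :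
    ∑ l ∈ Finset.range (Nat.clog 2 r + 1),
        ((2 : ℝ) ^ l * Real.logb 2 ((n : ℝ) / 2 ^ l) + 2 ^ (l + 2))
      ≤ 4 * r * Real.logb 2 ((n : ℝ) / r) + 20 * r := by
  set L := Nat.clog 2 r
  set A := logb 2 ((n : ℝ) / r)
  have hr0 : (0 : ℝ) < r := by exact_mod_cast hr
  have hrn' : (r : ℝ) ≤ n := by exact_mod_cast hrn
  have hrL : (r : ℝ) ≤ 2 ^ L := by exact_mod_cast Nat.le_pow_clog one_lt_two r
  have hLr : (2 : ℝ) ^ L ≤ 2 * r := by exact_mod_cast Nat.pow_clog_le_mul one_lt_two hr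
  have hA : 0 ≤ A := logb_nonneg one_lt_two ((one_le_div hr0).2 hrn')
  calc ∑ l ∈ range (L + 1), ((2 : ℝ) ^ l * logb 2 ((n : ℝ) / 2 ^ l) + 2 ^ (l + 2))
      ≤ ∑ l ∈ range (L + 1), ((2 : ℝ) ^ l * (A + (L - l)) + 2 ^ (l + 2)) := by
        refine sum_le_sum fun l _ => ?_
        gcongr
        exact logb_div_pow_le one_lt_two (hr0.trans_le hrn').ne' hr0 hrL l
    _ = (2 * 2 ^ L - 1) * A + (2 * 2 ^ L - L - 2) + 4 * (2 * 2 ^ L - 1) := by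
        simp only [mul_add, pow_succ, sum_add_distrib, ← sum_mul,
          sum_range_two_pow, sum_range_two_pow_mul_sub]
        ring
    _ ≤ 4 * r * A + 20 * r := by
        have hA_coeff : (2 * 2 ^ L - 1 : ℝ) * A ≤ 4 * r * A := by
          gcongr
          linarith
        have hL0 : (0 : ℝ) ≤ L := L.cast_nonneg
        linarith
end
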